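/- The Cauchy determinant identity: for variables a_1,...,a_n and b_1,...,b_n (with all a_i - b_j nonzero), the determinant of the n×n matrix with (i,j) entry 1/(a_i - b_j) equals (∏_{k=1}^n 1/(a_k - b_k)) · ∏_{1 ≤ j < k ≤ n} ((a_k - a_j)(b_k - b_j)) / ((a_k - b_j)(b_k - a_j)). -/
import Mathlib


open scoped BigOperators

/-- An integer partition, encoded as an antitone, finitely supported sequence of
natural numbers; `part i` is the `(i+1)`-st part `λ_{i+1}`. -/
structure Partition' where
  part : ℕ → ℕ
  antitone' : Antitone part
  finite_support : Set.Finite {i | part i ≠ 0}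

namespace Partition'

/-- The length `ℓ(λ)` (number of positive parts) of a partition. -/
noncomputable def length (l : Partition') : ℕ := l.finite_support.toFinset.card

/-- The size `|λ|` of a partition. -/
noncomputable def size (l : Partition') : ℕ := ∑ i ∈ l.finite_support.toFinset, l.part i

/-- `m_i(λ)`: the multiplicity of `i` as a part of `λ` (meant for `i ≥ 1`). -/
noncomputable def mult (l : Partition') (i : ℕ) : ℕ :=
  (l.finite_support.toFinset.filter fun j => l.part j = i).card

/-- `z_λ = ∏_{i ≥ 1} i^{m_i(λ)} · m_i(λ)!`. -/
noncomputable def zPart (l : Partition') : ℕ :=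
  ∏ᶠ i : ℕ, (i + 1) ^ l.mult (i + 1) * (l.mult (i + 1)).factorial

end Partition'

/-- Complete homogeneous symmetric polynomial with integer index; `0` for negative index. -/
noncomputable def hInt (n : ℕ) (R : Type*) [CommSemiring R] (k : ℤ) : MvPolynomial (Fin n) R :=
  if 0 ≤ k then MvPolynomial.hsymm (Fin n) R k.toNat else 0

/-- The Schur polynomial `s_λ` in `n` variables, defined via the Jacobi-Trudi formula. -/
noncomputable def schur (n : ℕ) (R : Type*) [CommRing R] (l : Partition') :
    MvPolynomial (Fin n) R :=
  Matrix.det (Matrix.of fun i j : Fin l.length => hInt n R ((l.part i : ℤ) - (i : ℕ) + (j : ℕ)))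

/-- The skew Schur polynomial `s_{λ/μ}` in `n` variables, via the Jacobi-Trudi formula. -/
noncomputable def skewSchur (n : ℕ) (R : Type*) [CommRing R] (l m : Partition') :
    MvPolynomial (Fin n) R :=
  Matrix.det (Matrix.of fun i j : Fin (max l.length m.length) =>
    hInt n R ((l.part i : ℤ) - (m.part j : ℤ) - (i : ℕ) + (j : ℕ)))

/-- The power sum product `p_λ = ∏_i p_{λ_i}`. -/
noncomputable def pProd (n : ℕ) (R : Type*) [CommSemiring R] (l : Partition') :
    MvPolynomial (Fin n) R :=
  ∏ i ∈ Finset.range l.length, MvPolynomial.psum (Fin n) R (l.part i)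


open Matrix Finset

/-- **Cauchy determinant identity.** -/
theorem cauchy_determinant {F : Type*} [Field F] (n : ℕ) (a b : Fin n → F)
    (hab : ∀ i j, a i ≠ b j) :
    Matrix.det (Matrix.of fun i j : Fin n => (a i - b j)⁻¹) =
      (∏ k, (a k - b k)⁻¹) *
        ∏ j, ∏ k ∈ Finset.Ioi j,
          ((a k - a j) * (b k - b j)) / ((a k - b j) * (b k - a j)) := by
  induction n with
  | zero => simp
  | succ n ih =>
    have ha : ∀ i j, a i - b j ≠ 0 := fun i j => sub_ne_zero.mpr (hab i j)
    have key : ∀ x y : F, x ≠ 0 → y ≠ 0 → x⁻¹ - y⁻¹ = (y - x) * (y⁻¹ * x⁻¹) := by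
      intro x y hx hy; field_simp
    set B : Matrix (Fin (n+1)) (Fin (n+1)) F :=
      of (Fin.cons (fun j => (a 0 - b j)⁻¹)
        (fun i' j => (a i'.succ - b j)⁻¹ - (a 0 - b j)⁻¹)) with hB
    set C : Matrix (Fin (n+1)) (Fin (n+1)) F :=
      of (Fin.cons (fun _ => (1:F)) (fun i' j => (a i'.succ - b j)⁻¹)) with hC
    set Dt : Matrix (Fin (n+1)) (Fin (n+1)) F :=
      of (Fin.cons (Fin.cons (1:F) (fun i' => (a i'.succ - b 0)⁻¹))
          (fun j' => Fin.cons (0:F)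
            (fun i' => (a i'.succ - b j'.succ)⁻¹ - (a i'.succ - b 0)⁻¹))) with hDt
    have stepA : det (of fun i j : Fin (n+1) => (a i - b j)⁻¹) = det B := by
      refine det_eq_of_forall_row_eq_smul_add_const
        (Fin.cons 0 1 : Fin (n+1) → F) 0 (Fin.cons_zero _ _) ?_
      intro i j
      refine Fin.cases ?_ (fun i' => ?_) i
      · simp [hB]
      · simp only [hB, of_apply, Fin.cons_succ, Fin.cons_zero, Pi.one_apply, one_mul]
        ring
    have stepB : det B = (∏ i' : Fin n, (a 0 - a i'.succ)) *
        ((∏ j : Fin (n+1), (a 0 - b j)⁻¹) * det C) := by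
      have hBeq : B = of fun i j =>
          (Fin.cons (1:F) (fun i' => a 0 - a i'.succ) : Fin (n+1) → F) i *
          ((of fun i j : Fin (n+1) => (a 0 - b j)⁻¹ * C i j) i j) := by
        ext i j
        refine Fin.cases ?_ (fun i' => ?_) i
        · simp [hB, hC]
        · simp only [hB, hC, of_apply, Fin.cons_succ]
          rw [key _ _ (ha i'.succ j) (ha 0 j)]
          ring_nf
      rw [hBeq, det_mul_column, det_mul_row, Fin.prod_univ_succ, Fin.cons_zero, one_mul]
      simp only [Fin.cons_succ]
    have stepC : det C = det Dt := by
      rw [← det_transpose]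
      refine det_eq_of_forall_row_eq_smul_add_const
        (Fin.cons 0 1 : Fin (n+1) → F) 0 (Fin.cons_zero _ _) ?_
      intro j i
      refine Fin.cases ?_ (fun j' => ?_) j
      · refine Fin.cases ?_ (fun i' => ?_) i <;> simp [hC, hDt]
      · refine Fin.cases ?_ (fun i' => ?_) i <;> simp [hC, hDt] <;> ring
    have stepD : det Dt = det (Dt.submatrix Fin.succ Fin.succ) := by
      rw [det_succ_column_zero, Fin.sum_univ_succ]
      simp [hDt, Fin.succAbove_zero]
    have stepE : det (Dt.submatrix Fin.succ Fin.succ) =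
        (∏ j' : Fin n, (b j'.succ - b 0)) * ((∏ i' : Fin n, (a i'.succ - b 0)⁻¹) *
          det (of fun j' i' : Fin n => (a i'.succ - b j'.succ)⁻¹)) := by
      have hsub : Dt.submatrix Fin.succ Fin.succ = of fun j' i' : Fin n =>
          (b j'.succ - b 0) * ((of fun j' i' : Fin n =>
            (a i'.succ - b 0)⁻¹ *
              ((of fun j' i' : Fin n => (a i'.succ - b j'.succ)⁻¹) j' i')) j' i') := by
        ext j' i'
        simp only [hDt, submatrix_apply, of_apply, Fin.cons_succ]
        rw [key _ _ (ha i'.succ j'.succ) (ha i'.succ 0)]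
        ring_nf
      rw [hsub, det_mul_column, det_mul_row]
    have stepF : det (of fun j' i' : Fin n => (a i'.succ - b j'.succ)⁻¹) =
        (∏ k : Fin n, (a k.succ - b k.succ)⁻¹) *
          ∏ j' : Fin n, ∏ k ∈ Finset.Ioi j',
            ((a k.succ - a j'.succ) * (b k.succ - b j'.succ)) /
              ((a k.succ - b j'.succ) * (b k.succ - a j'.succ)) := by
      have h2 : (of fun j' i' : Fin n => (a i'.succ - b j'.succ)⁻¹) =
          (of fun i j : Fin n => ((fun i => a i.succ) i - (fun j => b j.succ) j)⁻¹)ᵀ := rfl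
      rw [h2, det_transpose]
      exact ih _ _ (fun i j => hab i.succ j.succ)
    rw [stepA, stepB, stepC, stepD, stepE, stepF]
    rw [Fin.prod_univ_succ (fun k => (a k - b k)⁻¹)]
    rw [Fin.prod_univ_succ (fun j => ∏ k ∈ Finset.Ioi j,
      ((a k - a j) * (b k - b j)) / ((a k - b j) * (b k - a j))), Fin.prod_Ioi_zero]
    simp_rw [Fin.prod_Ioi_succ]
    rw [Fin.prod_univ_succ (fun j => (a 0 - b j)⁻¹)]
    have hprod : (∏ k : Fin n, (a 0 - a k.succ)) *
        ((∏ k : Fin n, (a 0 - b k.succ)⁻¹) *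
          ((∏ k : Fin n, (b k.succ - b 0)) * (∏ k : Fin n, (a k.succ - b 0)⁻¹))) =
        ∏ k : Fin n, (a k.succ - a 0) * (b k.succ - b 0) /
          ((a k.succ - b 0) * (b k.succ - a 0)) := by
      rw [← Finset.prod_mul_distrib, ← Finset.prod_mul_distrib, ← Finset.prod_mul_distrib]
      refine Finset.prod_congr rfl fun k _ => ?_
      have h1 := ha k.succ 0
      have h2 := ha 0 k.succ
      have h3 : b k.succ - a 0 ≠ 0 := sub_ne_zero.mpr (hab 0 k.succ).symm
      field_simp
      ring
    rw [← hprod]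
    ring
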